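/- For every γ ∈ ℝ and h > 0 there exists a constant B_{γ,h} > 0, depending only on γ and h, such that for all x ≥ 1: x^{−(γ+1)} · ∫₁^∞ e^{−ξ²/(2x)} · ξ^γ · |ψ_ξ(h)| dξ ≤ B_{γ,h} · x^{−(γ + 1/2)}. -/

import Mathlib

/-! Dropping the Gaussian factor and the sine, `|ψ_ξ(h)|` is at most
`∫_0^∞ e^{-ξ cosh w} sinh w dw = e^{-ξ}/ξ ≤ e^{-ξ}` for `ξ ≥ 1`. Hence the integral
`∫_1^∞ e^{-ξ²/(2x)} ξ^γ |ψ_ξ(h)| dξ` is bounded uniformly in `x` by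
`∫_1^∞ ξ^{max γ 0} e^{-ξ} dξ`, and `x^{-(γ+1)} ≤ x^{-(γ+1/2)}` for `x ≥ 1`. -/

open MeasureTheory Real Set

/-- `ψ_ξ(h) = ∫_0^∞ exp (-w²/(2h) - ξ cosh w) sinh w sin (πw/h) dw`. -/
noncomputable def psi (h ξ : ℝ) : ℝ :=
  ∫ w in Set.Ioi (0:ℝ),
    Real.exp (-w^2/(2*h) - ξ * Real.cosh w) * Real.sinh w * Real.sin (Real.pi * w / h)

/-- Yor's Asia density `α_{ν,h}(x) = e^{-x/2} ∫_0^∞ y^ν e^{-x y²/2} ψ_{xy}(h) dy`. -/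
noncomputable def asiaDensity (ν h x : ℝ) : ℝ :=
  Real.exp (-x/2) * ∫ y in Set.Ioi (0:ℝ), y ^ ν * Real.exp (-x*y^2/2) * psi h (x*y)

open Filter Topology

lemma tendsto_cosh_atTop : Tendsto cosh atTop atTop := by
  refine tendsto_atTop_mono (fun w => ?_) (tendsto_exp_atTop.atTop_div_const two_pos)
  rw [cosh_eq]
  linarith [exp_pos (-w)]

lemma hasDerivAt_neg_exp_neg_mul_cosh_div {ξ : ℝ} (hξ : ξ ≠ 0) (w : ℝ) :
    HasDerivAt (fun w => -exp (-ξ * cosh w) / ξ) (exp (-ξ * cosh w) * sinh w) w := by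
  refine ((((hasDerivAt_cosh w).const_mul (-ξ)).exp.neg).div_const ξ).congr_deriv ?_
  field_simp

lemma tendsto_neg_exp_neg_mul_cosh_div {ξ : ℝ} (hξ : 0 < ξ) :
    Tendsto (fun w => -exp (-ξ * cosh w) / ξ) atTop (𝓝 0) := by
  have hexp : Tendsto (fun w => exp (-ξ * cosh w)) atTop (𝓝 0) :=
    tendsto_exp_atBot.comp
      (tendsto_const_nhds.neg_mul_atTop (neg_neg_iff_pos.mpr hξ) tendsto_cosh_atTop)
  simpa using hexp.neg.div_const ξ

lemma exp_neg_mul_cosh_mul_sinh_nonneg (ξ : ℝ) {w : ℝ} (hw : 0 ≤ w) :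
    0 ≤ exp (-ξ * cosh w) * sinh w :=
  mul_nonneg (exp_pos _).le (sinh_nonneg_iff.mpr hw)

lemma integrableOn_exp_neg_mul_cosh_mul_sinh {ξ : ℝ} (hξ : 0 < ξ) :
    IntegrableOn (fun w => exp (-ξ * cosh w) * sinh w) (Ioi 0) :=
  integrableOn_Ioi_deriv_of_nonneg' (fun w _ => hasDerivAt_neg_exp_neg_mul_cosh_div hξ.ne' w)
    (fun _ hw => exp_neg_mul_cosh_mul_sinh_nonneg ξ (le_of_lt hw))
    (tendsto_neg_exp_neg_mul_cosh_div hξ)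

lemma integral_exp_neg_mul_cosh_mul_sinh {ξ : ℝ} (hξ : 0 < ξ) :
    ∫ w in Ioi 0, exp (-ξ * cosh w) * sinh w = exp (-ξ) / ξ := by
  rw [integral_Ioi_of_hasDerivAt_of_nonneg'
    (fun w _ => hasDerivAt_neg_exp_neg_mul_cosh_div hξ.ne' w)
    (fun _ hw => exp_neg_mul_cosh_mul_sinh_nonneg ξ (le_of_lt hw))
    (tendsto_neg_exp_neg_mul_cosh_div hξ)]
  simp [cosh_zero, neg_div]

lemma abs_psi_le_exp_neg_div {h ξ : ℝ} (hh : 0 < h) (hξ : 0 < ξ) :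
    |psi h ξ| ≤ exp (-ξ) / ξ := by
  rw [← integral_exp_neg_mul_cosh_mul_sinh hξ, ← norm_eq_abs, psi]
  refine norm_integral_le_of_norm_le (integrableOn_exp_neg_mul_cosh_mul_sinh hξ) ?_
  filter_upwards [self_mem_ae_restrict measurableSet_Ioi] with w (hw : 0 < w)
  have hgauss : exp (-w ^ 2 / (2 * h) - ξ * cosh w) ≤ exp (-ξ * cosh w) := by
    gcongr
    have : 0 ≤ w ^ 2 / (2 * h) := by positivity
    linarith [neg_div (2 * h) (w ^ 2)]
  rw [norm_mul, norm_mul, norm_of_nonneg (exp_pos _).le, norm_of_nonneg (sinh_nonneg_iff.mpr hw.le)]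
  calc exp (-w ^ 2 / (2 * h) - ξ * cosh w) * sinh w * ‖sin (π * w / h)‖
      ≤ exp (-ξ * cosh w) * sinh w * 1 := by
        gcongr
        exact (norm_eq_abs _).trans_le (abs_sin_le_one _)
    _ = exp (-ξ * cosh w) * sinh w := mul_one _

lemma abs_psi_le_exp_neg {h ξ : ℝ} (hh : 0 < h) (hξ : 1 ≤ ξ) : |psi h ξ| ≤ exp (-ξ) :=
  (abs_psi_le_exp_neg_div hh (one_pos.trans_le hξ)).trans (div_le_self (exp_pos _).le hξ)

lemma exp_neg_sq_div_mul_rpow_mul_abs_psi_le {γ h x ξ : ℝ} (hh : 0 < h) (hx : 0 ≤ x)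
    (hξ : 1 ≤ ξ) :
    exp (-ξ ^ 2 / (2 * x)) * ξ ^ γ * |psi h ξ| ≤ ξ ^ max γ 0 * exp (-ξ) := by
  have hgauss : exp (-ξ ^ 2 / (2 * x)) ≤ 1 := by
    rw [exp_le_one_iff, neg_div, neg_nonpos]
    positivity
  calc exp (-ξ ^ 2 / (2 * x)) * ξ ^ γ * |psi h ξ| ≤ 1 * ξ ^ max γ 0 * exp (-ξ) := by
        gcongr
        · exact le_max_left γ 0
        · exact abs_psi_le_exp_neg hh hξ
    _ = ξ ^ max γ 0 * exp (-ξ) := by rw [one_mul]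

lemma integrableOn_rpow_mul_exp_neg_Ioi {a s : ℝ} (ha : 0 ≤ a) (hs : -1 < s) :
    IntegrableOn (fun ξ : ℝ => ξ ^ s * exp (-ξ)) (Ioi a) := by
  have h := integrableOn_rpow_mul_exp_neg_rpow hs one_pos
  simp only [rpow_one] at h
  exact h.mono_set (Ioi_subset_Ioi ha)

lemma integral_exp_neg_sq_div_mul_rpow_mul_abs_psi_le (γ : ℝ) {h x : ℝ} (hh : 0 < h)
    (hx : 0 ≤ x) :
    ∫ ξ in Ioi 1, exp (-ξ ^ 2 / (2 * x)) * ξ ^ γ * |psi h ξ|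
      ≤ ∫ ξ in Ioi 1, ξ ^ max γ 0 * exp (-ξ) := by
  refine integral_mono_of_nonneg ?_
    (integrableOn_rpow_mul_exp_neg_Ioi zero_le_one (by linarith [le_max_right γ 0])) ?_ <;>
    filter_upwards [self_mem_ae_restrict measurableSet_Ioi] with ξ (hξ : 1 < ξ)
  · have := hξ.le
    positivity
  · exact exp_neg_sq_div_mul_rpow_mul_abs_psi_le hh hx hξ.le

/-- There is a constant `B_{γ,h} > 0` such that for all `x ≥ 1`,
`x^{-(γ+1)} ∫_1^∞ e^{-ξ²/(2x)} ξ^γ |ψ_ξ(h)| dξ ≤ B_{γ,h} x^{-(γ+1/2)}`. -/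
theorem psi_inner_integral_majorization (γ h : ℝ) (hh : 0 < h) :
    ∃ B : ℝ, 0 < B ∧ ∀ x : ℝ, 1 ≤ x →
      x ^ (-(γ+1)) * ∫ ξ in Set.Ioi (1:ℝ), Real.exp (-ξ^2/(2*x)) * ξ ^ γ * |psi h ξ|
        ≤ B * x ^ (-(γ + 1/2)) := by
  set C := ∫ ξ in Ioi (1:ℝ), ξ ^ max γ 0 * exp (-ξ)
  have hC : 0 ≤ C := setIntegral_nonneg measurableSet_Ioi fun ξ (hξ : 1 < ξ) => by
    have := hξ.le
    positivity
  refine ⟨C + 1, by positivity, fun x hx => ?_⟩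
  calc x ^ (-(γ+1)) * ∫ ξ in Ioi (1:ℝ), exp (-ξ^2/(2*x)) * ξ ^ γ * |psi h ξ|
      ≤ x ^ (-(γ+1)) * C := by
        gcongr
        exact integral_exp_neg_sq_div_mul_rpow_mul_abs_psi_le γ hh (zero_le_one.trans hx)
    _ ≤ x ^ (-(γ + 1/2)) * C :=
        mul_le_mul_of_nonneg_right (rpow_le_rpow_of_exponent_le hx (by linarith)) hC
    _ ≤ (C + 1) * x ^ (-(γ + 1/2)) := by
        rw [mul_comm]
        gcongr
        linarith
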